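/- For every integer k ≥ 2 and every finite ordered tree t of rank at most k in which every node is either a leaf or has at least two children, the number of leaves satisfies ℓ(σ(t)) ≥ ℓ(t)^{log_k 2}, where ℓ(s) denotes the number of leaves of a tree s. -/

import Mathlib

/-! ## Finite ordered trees -/

inductive OTree (α : Type) : Type where
  | node : α → List (OTree α) → OTree α

namespace OTree

/-- Number of nodes of a tree. -/
def size {α : Type} : OTree α → ℕ
  | node _ ts => 1 + (ts.attach.map (fun x => size x.1)).sum
decreasing_by
  have := List.sizeOf_lt_of_mem x.2
  simp only [OTree.node.sizeOf_spec]
  omega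

/-- Does some label in the tree satisfy `p`? -/
def anyLabel {α : Type} (p : α → Bool) : OTree α → Bool
  | node l ts => p l || ts.attach.any (fun x => anyLabel p x.1)
decreasing_by
  have := List.sizeOf_lt_of_mem x.2
  simp only [OTree.node.sizeOf_spec]
  omega

/-- Rank: maximum number of children of a node. -/
def rank {α : Type} : OTree α → ℕ
  | node _ ts => max ts.length ((ts.attach.map (fun x => rank x.1)).foldr max 0)
decreasing_by
  have := List.sizeOf_lt_of_mem x.2
  simp only [OTree.node.sizeOf_spec]
  omega

/-- Root label. -/
def root {α : Type} : OTree α → α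
  | node l _ => l

end OTree

/-! ## Prioritized NFA -/

/-- A prioritized NFA over alphabet `A` with state set `Q`.  `isQ2 q = true` means `q ∈ Q₂`
(the ε-states); `isQ2 q = false` means `q ∈ Q₁`.  `d1` is the (partial) deterministic
transition function on `Q₁`, `d2` the prioritized ε-transition function on `Q₂`
(the list order gives the priorities), `final` the set of final states. -/
structure PNFA (A Q : Type) where
  isQ2 : Q → Bool
  init : Q
  d1 : Q → A → Option Q
  d2 : Q → List Q
  final : Q → Bool

/-- Labels of nodes of backtracking runs: states, `acc` and `rej`. -/
inductive BLab (Q : Type) : Type where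
  | st : Q → BLab Q
  | acc : BLab Q
  | rej : BLab Q

/-- A backtracking run succeeds iff `acc` occurs in it. -/
def OTree.succeeds {Q : Type} (t : OTree (BLab Q)) : Bool :=
  t.anyLabel (fun l => match l with | BLab.acc => true | _ => false)

/-- Keep the children trees up to and including the first succeeding one
(all of them if none succeeds). -/
def firstSucc {Q : Type} : List (OTree (BLab Q)) → List (OTree (BLab Q))
  | [] => []
  | t :: ts => if t.succeeds then [t] else t :: firstSucc ts

/-- Termination measure for ε-recursions. -/
def cMeasure {A Q : Type} [Fintype Q] (M : PNFA A Q) (C : Q → ℕ) : ℕ :=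
  ∑ q : Q, ((M.d2 q).length - min (C q) (M.d2 q).length)

/-- The `(q,w,C)`-backtracking run of the pNFA `M`. -/
def btr {A Q : Type} [DecidableEq Q] [Fintype Q] (M : PNFA A Q) (q : Q) (w : List A)
    (C : Q → ℕ) : OTree (BLab Q) :=
  if M.final q = true ∧ w.isEmpty = true then .node (.st q) [.node .acc []]
  else if M.isQ2 q = true then
    if hik : (M.d2 q).length < C q + 1 then .node (.st q) [.node .rej []]
    else
      .node (.st q) (firstSucc ((List.range' (C q + 1) ((M.d2 q).length - C q)).attach.map
        (fun x => btr M ((M.d2 q)[x.1 - 1]'(by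
            have hx := x.2; rw [List.mem_range'_1] at hx; omega)) w
          (Function.update C q x.1))))
  else
    match w with
    | [] => .node (.st q) [.node .rej []]
    | a :: w' =>
      match M.d1 q a with
      | some q' => .node (.st q) [btr M q' w' (fun _ => 0)]
      | none => .node (.st q) [.node .rej []]
termination_by (w.length, cMeasure M C)
decreasing_by
  · apply Prod.Lex.right
    have hx := x.2; rw [List.mem_range'_1] at hx
    apply Finset.sum_lt_sum
    · intro p _
      by_cases hp : p = q
      · subst hp; simp only [Function.update_self]; omega
      · simp only [Function.update_of_ne hp]; omega
    · exact ⟨q, Finset.mem_univ q, by simp only [Function.update_self]; omega⟩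
  · apply Prod.Lex.left
    simp

/-- The backtracking run of `M` on `w`. -/
def btrW {A Q : Type} [DecidableEq Q] [Fintype Q] (M : PNFA A Q) (w : List A) :
    OTree (BLab Q) :=
  btr M M.init w (fun _ => 0)

/-! ## NFA with ε-transitions -/

/-- An NFA with ε-transitions (`none` plays the role of ε). -/
structure ENFA (A Q : Type) where
  init : Q
  tr : Q → Option A → Set Q
  F : Set Q

namespace ENFA

inductive Steps {A Q : Type} (N : ENFA A Q) : Q → List A → Q → Prop
  | refl (q : Q) : Steps N q [] q
  | eps {p q r : Q} {w : List A} : q ∈ N.tr p none → Steps N q w r → Steps N p w r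
  | sym {p q r : Q} {a : A} {w : List A} :
      q ∈ N.tr p (some a) → Steps N q w r → Steps N p (a :: w) r

/-- The language accepted by the ε-NFA. -/
def Lang {A Q : Type} (N : ENFA A Q) : Set (List A) :=
  {w | ∃ q, q ∈ N.F ∧ N.Steps N.init w q}

end ENFA

/-- The NFA `Ā` corresponding to a pNFA (forget priorities). -/
def PNFA.toENFA {A Q : Type} (M : PNFA A Q) : ENFA A Q where
  init := M.init
  tr q o :=
    match o with
    | some a => if M.isQ2 q then ∅ else {q' | M.d1 q a = some q'}
    | none => if M.isQ2 q then {q' | q' ∈ M.d2 q} else ∅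
  F := {q | M.final q = true}

/-! ## Growth conditions -/

/-- `f` grows exponentially, i.e. `f ∈ 2^{Ω(n)}`. -/
def ExpGrowth (f : ℕ → ℕ) : Prop :=
  ∃ c : ℝ, 1 < c ∧ ∃ N : ℕ, ∀ n ≥ N, c ^ n ≤ (f n : ℝ)

/-- `f(n) = max {|btr_M(w)| : |w| ≤ n}` (the alphabet being finite, the set below is a
nonempty bounded set of naturals, so `sSup` is its maximum). -/
noncomputable def btrMax {A Q : Type} [Fintype A] [DecidableEq Q] [Fintype Q]
    (M : PNFA A Q) (n : ℕ) : ℕ :=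
  sSup {m | ∃ w : List A, w.length ≤ n ∧ m = (btrW M w).size}

/-- Number of leaves of a tree. -/
def OTree.leaves {α : Type} : OTree α → ℕ
  | .node _ [] => 1
  | .node _ ts => (ts.attach.map (fun x => leaves x.1)).sum
decreasing_by
  have := List.sizeOf_lt_of_mem x.2
  simp only [OTree.node.sizeOf_spec]
  omega

/-- Every node is a leaf or has at least two children. -/
def Branching {α : Type} : OTree α → Prop
  | .node _ ts => (ts.length = 0 ∨ 2 ≤ ts.length) ∧ ∀ x ∈ ts.attach, Branching x.1
decreasing_by
  have := List.sizeOf_lt_of_mem x.2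
  simp only [OTree.node.sizeOf_spec]
  omega

/-- Specification of the pruning function σ: it keeps leaves, keeps unary nodes
(recursively pruned), and at nodes with `k ≥ 2` children keeps (the prunings of)
two largest children. -/
def SigmaSpec {α : Type} (σ : OTree α → OTree α) : Prop :=
  ∀ (a : α) (ts : List (OTree α)),
    (ts = [] → σ (.node a ts) = .node a ts) ∧
    (∀ t, ts = [t] → σ (.node a ts) = .node a [σ t]) ∧
    (2 ≤ ts.length →
      ∃ i j : Fin ts.length, i ≠ j ∧
        (∀ l : Fin ts.length, l ≠ i → l ≠ j →
          (ts.get l).size ≤ (ts.get i).size ∧ (ts.get l).size ≤ (ts.get j).size) ∧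
        σ (.node a ts) = .node a [σ (ts.get i), σ (ts.get j)])

/-!
Let `p = log_k 2` and `g(n) = leafBound k n = ((k - 1) n + 1) / k`, the largest number of
leaves of a tree of rank at most `k` with `n` nodes. By induction, `g(|t|)^p ≤ ℓ(σ t)`: if the
two subtrees kept by `σ` have sizes `M ≥ m`, the at most `k - 2` others have size at most `m`,
so `g(|t|) ≤ g(M) + (k - 1) g(m)`. Since `x ↦ x^p` is concave and `(k y)^p = 2 y^p`,
`(X + (k - 1) Y)^p ≤ X^p + Y^p` for `X ≥ Y ≥ 0`, which closes the induction.
-/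

open Real

theorem ConcaveOn.submodular {s : Set ℝ} {f : ℝ → ℝ} (hf : ConcaveOn ℝ s f) {y c d : ℝ}
    (hy : y ∈ s) (hycd : y + c + d ∈ s) (hc : 0 ≤ c) (hd : 0 ≤ d) :
    f (y + c + d) + f y ≤ f (y + c) + f (y + d) := by
  rcases (add_nonneg hc hd).eq_or_lt with hcd | hcd
  · obtain ⟨rfl, rfl⟩ : c = 0 ∧ d = 0 := ⟨by linarith, by linarith⟩
    simp
  -- `y + c` and `y + d` are the convex combinations of `y` and `y + c + d` with swapped weights.
  have hsum : d / (c + d) + c / (c + d) = 1 := by field_simp; ring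
  have hc' := hf.2 hy hycd (by positivity) (by positivity) hsum
  have hd' := hf.2 hy hycd (by positivity) (by positivity) ((add_comm _ _).trans hsum)
  have ec : d / (c + d) * y + c / (c + d) * (y + c + d) = y + c := by field_simp; ring
  have ed : c / (c + d) * y + d / (c + d) * (y + c + d) = y + d := by field_simp; ring
  simp only [smul_eq_mul, ec, ed] at hc' hd'
  linear_combination hc' + hd' - (f y + f (y + c + d)) * hsum

theorem rpow_logb_max_add_mul_min_le {K a b : ℝ} (hK : 2 ≤ K) (ha : 0 ≤ a) (hb : 0 ≤ b) :
    (max a b + (K - 1) * min a b) ^ logb K 2 ≤ a ^ logb K 2 + b ^ logb K 2 := by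
  wlog hba : b ≤ a generalizing a b
  · simpa only [max_comm, min_comm, add_comm] using this hb ha (le_of_not_ge hba)
  rw [max_eq_left hba, min_eq_right hba]
  have hK1 : 1 < K := by linarith
  have hp : ConcaveOn ℝ (Set.Ici 0) fun x : ℝ => x ^ logb K 2 := by
    refine Real.concaveOn_rpow (logb_pos hK1 one_lt_two).le ?_
    rw [logb, div_le_one (log_pos hK1)]
    exact log_le_log two_pos hK
  have hKb : (K * b) ^ logb K 2 = 2 * b ^ logb K 2 := by
    rw [mul_rpow (by linarith) hb, rpow_logb (by linarith) hK1.ne' two_pos]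
  have := hp.submodular (c := (K - 1) * b) (d := a - b) (Set.mem_Ici.2 hb)
    (Set.mem_Ici.2 (by nlinarith)) (by nlinarith) (by linarith)
  rw [show b + (K - 1) * b + (a - b) = a + (K - 1) * b by ring,
    show b + (K - 1) * b = K * b by ring, show b + (a - b) = a by ring, hKb] at this
  linarith

theorem Fintype.sum_le_max_add_mul_min {ι : Type*} [Fintype ι] [DecidableEq ι] (f : ι → ℕ)
    {i j : ι} (hij : i ≠ j) (hmax : ∀ l, l ≠ i → l ≠ j → f l ≤ f i ∧ f l ≤ f j) :
    ∑ l, f l ≤ max (f i) (f j) + (Fintype.card ι - 1) * min (f i) (f j) := by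
  have hj : j ∈ Finset.univ.erase i := Finset.mem_erase.2 ⟨hij.symm, Finset.mem_univ j⟩
  rw [← Finset.add_sum_erase _ _ (Finset.mem_univ i), ← Finset.add_sum_erase _ _ hj]
  have hrest : ∑ l ∈ (Finset.univ.erase i).erase j, f l
      ≤ (Fintype.card ι - 2) * min (f i) (f j) := by
    have := Finset.sum_le_card_nsmul ((Finset.univ.erase i).erase j) f (min (f i) (f j))
      fun l hl => by
        obtain ⟨hlj, hl⟩ := Finset.mem_erase.1 hl
        exact le_min_iff.2 (hmax l (Finset.mem_erase.1 hl).1 hlj)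
    rwa [Finset.card_erase_of_mem hj, Finset.card_erase_of_mem (Finset.mem_univ i),
      Finset.card_univ, smul_eq_mul, Nat.sub_sub] at this
  have hcard : (Fintype.card ι - 1) * min (f i) (f j)
      = (Fintype.card ι - 2) * min (f i) (f j) + min (f i) (f j) := by
    rw [← Nat.succ_mul]
    have : 1 < Fintype.card ι := Fintype.one_lt_card_iff.2 ⟨i, j, hij⟩
    congr 1
    omega
  omega

namespace OTree

variable {α : Type}

@[elab_as_elim]
theorem induction_mem {P : OTree α → Prop}
    (node : ∀ a ts, (∀ c ∈ ts, P c) → P (.node a ts)) : ∀ t, P t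
  | .node a ts => node a ts fun c _ => induction_mem node c
decreasing_by
  have := List.sizeOf_lt_of_mem ‹c ∈ ts›
  simp only [OTree.node.sizeOf_spec]
  omega

theorem size_node (a : α) (ts : List (OTree α)) :
    (node a ts).size = 1 + (ts.map size).sum := by
  simp [size]

theorem leaves_node_nil (a : α) : (node a []).leaves = 1 := by
  simp [leaves]

theorem leaves_node_of_ne_nil (a : α) {ts : List (OTree α)} (hts : ts ≠ []) :
    (node a ts).leaves = (ts.map leaves).sum := by
  simp [leaves]

theorem length_le_rank (a : α) (ts : List (OTree α)) : ts.length ≤ (node a ts).rank := by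
  rw [rank]
  exact le_max_left _ _

theorem rank_le_rank_node {a : α} {ts : List (OTree α)} {c : OTree α} (hc : c ∈ ts) :
    c.rank ≤ (node a ts).rank := by
  simp only [rank, List.map_attach_eq_pmap, List.pmap_eq_map]
  exact le_max_of_le_right (List.le_max_of_le' 0 (List.mem_map_of_mem hc) le_rfl)

theorem branching_node_iff {a : α} {ts : List (OTree α)} :
    Branching (node a ts) ↔ (ts = [] ∨ 2 ≤ ts.length) ∧ ∀ c ∈ ts, Branching c := by
  rw [Branching]
  simp

theorem mul_leaves_add_size_le {k : ℕ} (t : OTree α) (hrk : t.rank ≤ k) :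
    k * t.leaves + t.size ≤ k * t.size + 1 := by
  induction t using induction_mem with
  | node a ts ih =>
    rcases eq_or_ne ts [] with rfl | hts
    · simp [leaves_node_nil, size_node]
    have hchildren : ((ts.map fun c => k * c.leaves + c.size).sum)
        ≤ (ts.map fun c => k * c.size + 1).sum :=
      List.sum_le_sum fun c hc => ih c hc ((rank_le_rank_node hc).trans hrk)
    have hlen := (length_le_rank a ts).trans hrk
    simp only [List.sum_map_add, List.sum_map_mul_left, List.map_const', List.sum_replicate,
      smul_eq_mul, mul_one] at hchildren
    rw [leaves_node_of_ne_nil a hts, size_node]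
    nlinarith

end OTree

noncomputable def leafBound (k n : ℕ) : ℝ := (((k : ℝ) - 1) * n + 1) / k

section leafBound

variable {k : ℕ}

theorem OTree.leaves_le_leafBound {α : Type} (hk : 0 < k) (t : OTree α) (hrk : t.rank ≤ k) :
    (t.leaves : ℝ) ≤ leafBound k t.size := by
  have := t.mul_leaves_add_size_le hrk
  rw [leafBound, le_div_iff₀ (by exact_mod_cast hk)]
  have : (k * t.leaves + t.size : ℝ) ≤ k * t.size + 1 := by exact_mod_cast this
  linarith

theorem leafBound_one (hk : 0 < k) : leafBound k 1 = 1 := by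
  rw [leafBound, div_eq_one_iff_eq (by positivity)]
  ring

theorem leafBound_nonneg (hk : 1 ≤ k) (n : ℕ) : 0 ≤ leafBound k n := by
  have : (1 : ℝ) ≤ k := by exact_mod_cast hk
  unfold leafBound
  positivity

theorem leafBound_mono (hk : 1 ≤ k) : Monotone (leafBound k) := by
  have : (1 : ℝ) ≤ k := by exact_mod_cast hk
  intro m n hmn
  unfold leafBound
  gcongr

theorem leafBound_one_add_add_mul (hk : 1 ≤ k) (M m : ℕ) :
    leafBound k (1 + M + (k - 1) * m) = leafBound k M + ((k : ℝ) - 1) * leafBound k m := by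
  have : (k : ℝ) ≠ 0 := by positivity
  simp only [leafBound, Nat.cast_add, Nat.cast_mul, Nat.cast_sub hk, Nat.cast_one]
  field_simp
  ring

end leafBound

theorem OTree.leafBound_size_rpow_le_leaves_sigma {α : Type} {k : ℕ} (hk : 2 ≤ k)
    {σ : OTree α → OTree α} (hσ : SigmaSpec σ) (t : OTree α) (hrk : t.rank ≤ k)
    (hbr : Branching t) : leafBound k t.size ^ logb k 2 ≤ (σ t).leaves := by
  have hp : 0 ≤ logb k 2 := (logb_pos (by exact_mod_cast hk) one_lt_two).le
  induction t using OTree.induction_mem with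
  | node a ts ih =>
    obtain ⟨rfl | hlen, hbr⟩ := OTree.branching_node_iff.1 hbr
    · simp [(hσ a []).1 rfl, OTree.leaves_node_nil, OTree.size_node,
        leafBound_one (by omega : 0 < k)]
    obtain ⟨i, j, hij, hmax, hσt⟩ := (hσ a ts).2.2 hlen
    have ih' (l : Fin ts.length) := ih (ts.get l) (List.get_mem ts l)
      ((OTree.rank_le_rank_node (List.get_mem ts l)).trans hrk) (hbr _ (List.get_mem ts l))
    set si := (ts.get i).size
    set sj := (ts.get j).size
    have hsize : (OTree.node a ts).size ≤ 1 + max si sj + (k - 1) * min si sj := by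
      have hsum := Fintype.sum_le_max_add_mul_min (fun l => (ts.get l).size) hij hmax
      have hlen := (OTree.length_le_rank a ts).trans hrk
      have hsizes : (ts.map OTree.size).sum = ∑ l, (ts.get l).size := by
        rw [← List.sum_ofFn]
        simp
      rw [Fintype.card_fin] at hsum
      rw [OTree.size_node, hsizes]
      linarith [Nat.mul_le_mul_right (min si sj) (Nat.sub_le_sub_right hlen 1)]
    have hmono := leafBound_mono (k := k) (by omega)
    calc leafBound k (OTree.node a ts).size ^ logb k 2
        ≤ leafBound k (1 + max si sj + (k - 1) * min si sj) ^ logb k 2 :=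
          rpow_le_rpow (leafBound_nonneg (by omega) _) (hmono hsize) hp
      _ = (max (leafBound k si) (leafBound k sj)
            + ((k : ℝ) - 1) * min (leafBound k si) (leafBound k sj)) ^ logb k 2 := by
          rw [leafBound_one_add_add_mul (by omega), hmono.map_max, hmono.map_min]
      _ ≤ leafBound k si ^ logb k 2 + leafBound k sj ^ logb k 2 :=
          rpow_logb_max_add_mul_min_le (by exact_mod_cast hk) (leafBound_nonneg (by omega) _)
            (leafBound_nonneg (by omega) _)
      _ ≤ (σ (ts.get i)).leaves + (σ (ts.get j)).leaves := add_le_add (ih' i) (ih' j)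
      _ = (σ (OTree.node a ts)).leaves := by
          rw [hσt, OTree.leaves_node_of_ne_nil a (List.cons_ne_nil _ _)]
          simp

/-- For `k ≥ 2` and a tree `t` of rank at most `k` in which every node
is a leaf or has at least two children, `ℓ(σ(t)) ≥ ℓ(t)^{log_k 2}`. -/
theorem statement1 {α : Type} (k : ℕ) (hk : 2 ≤ k)
    (σ : OTree α → OTree α) (hσ : SigmaSpec σ)
    (t : OTree α) (hrk : t.rank ≤ k) (hbr : Branching t) :
    (t.leaves : ℝ) ^ (Real.logb k 2) ≤ ((σ t).leaves : ℝ) :=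
  calc (t.leaves : ℝ) ^ logb k 2 ≤ leafBound k t.size ^ logb k 2 :=
        rpow_le_rpow (Nat.cast_nonneg _) (t.leaves_le_leafBound (by omega) hrk)
          (logb_pos (by exact_mod_cast hk) one_lt_two).le
    _ ≤ (σ t).leaves := t.leafBound_size_rpow_le_leaves_sigma hk hσ hrk hbr
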